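/- With the clipping consistency set C(y) as above, the squared distance satisfies (1/2) dist(x, C(y))² = (1/2)[ ‖M_r(y − x)‖₂² + ‖M_c⁺(y − x)₊‖₂² + ‖M_c⁻(y − x)₋‖₂² ], where (v)₊ = max(0, v) and (v)₋ = min(0, v) coordinatewise. -/

import Mathlib

/-!
The constraints defining `C(y)` act on each coordinate separately, so `C(y)` is a product of
closed subsets of `ℝ` and the Euclidean distance to it is the `ℓ²` combination of the coordinate
distances, each attained at a nearest point. A reliable coordinate must equal `y i`; a positively
clipped one must lie in `[θ⁺, ∞)`, whose distance from `t` is `(θ⁺ - t)₊`; a negatively clipped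
one must lie in `(-∞, θ⁻]`, whose distance from `t` is `(t - θ⁻)₊ = |(θ⁻ - t)₋|`.
-/

open Metric Set

theorem PiLp.infDist_sq_eq_sum_infDist_sq {ι : Type*} [Fintype ι] {β : ι → Type*}
    [∀ i, SeminormedAddCommGroup (β i)] [∀ i, ProperSpace (β i)] {S : ∀ i, Set (β i)}
    (hS : ∀ i, IsClosed (S i)) (hne : ∀ i, (S i).Nonempty) (x : PiLp 2 β) :
    infDist x {w : PiLp 2 β | ∀ i, w i ∈ S i} ^ 2 = ∑ i, infDist (x i) (S i) ^ 2 := by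
  choose p hpS hp using fun i => (hS i).exists_infDist_eq_dist (hne i) (x i)
  have hz : WithLp.toLp 2 p ∈ {w : PiLp 2 β | ∀ i, w i ∈ S i} := hpS
  suffices infDist x {w : PiLp 2 β | ∀ i, w i ∈ S i} = dist x (WithLp.toLp 2 p) by
    simp only [this, PiLp.dist_sq_eq_of_L2, hp]
  refine le_antisymm (infDist_le_dist_of_mem hz) ((le_infDist ⟨_, hz⟩).2 fun w hw => ?_)
  rw [PiLp.dist_eq_of_L2, PiLp.dist_eq_of_L2]
  gcongr with i
  rw [PiLp.toLp_apply, ← hp i]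
  exact infDist_le_dist_of_mem (hw i)

theorem Real.infDist_Ici (t a : ℝ) : infDist t (Ici a) = max (a - t) 0 := by
  rcases le_total a t with hat | hta
  · rw [infDist_zero_of_mem (mem_Ici.2 hat), max_eq_right (sub_nonpos.2 hat)]
  rw [max_eq_left (sub_nonneg.2 hta)]
  refine le_antisymm ?_ ((le_infDist nonempty_Ici).2 fun s hs => ?_)
  · simpa [Real.dist_eq, abs_of_nonpos (sub_nonpos.2 hta)] using
      infDist_le_dist_of_mem (x := t) (self_mem_Ici (a := a))
  · rw [Real.dist_eq, abs_sub_comm]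
    exact (sub_le_sub_right hs t).trans (le_abs_self _)

theorem Real.infDist_Iic (t a : ℝ) : infDist t (Iic a) = max (t - a) 0 := by
  rcases le_total t a with hta | hat
  · rw [infDist_zero_of_mem (mem_Iic.2 hta), max_eq_right (sub_nonpos.2 hta)]
  rw [max_eq_left (sub_nonneg.2 hat)]
  refine le_antisymm ?_ ((le_infDist nonempty_Iic).2 fun s hs => ?_)
  · simpa [Real.dist_eq, abs_of_nonneg (sub_nonneg.2 hat)] using
      infDist_le_dist_of_mem (x := t) (self_mem_Iic (a := a))
  · rw [Real.dist_eq]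
    exact (sub_le_sub_left hs t).trans (le_abs_self _)

theorem stmt_12_general (N : ℕ) (θp θm : ℝ)
    (Ir Ip Im : Finset (Fin N))
    (hpart : ∀ i, (i ∈ Ir ∧ i ∉ Ip ∧ i ∉ Im) ∨ (i ∉ Ir ∧ i ∈ Ip ∧ i ∉ Im) ∨
      (i ∉ Ir ∧ i ∉ Ip ∧ i ∈ Im))
    (y : EuclideanSpace ℝ (Fin N))
    (hyp : ∀ i ∈ Ip, y i = θp) (hym : ∀ i ∈ Im, y i = θm)
    (C : Set (EuclideanSpace ℝ (Fin N)))
    (hC : C = {x : EuclideanSpace ℝ (Fin N) |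
      (∀ i ∈ Ir, x i = y i) ∧ (∀ i ∈ Ip, θp ≤ x i) ∧ (∀ i ∈ Im, x i ≤ θm)})
    (x : EuclideanSpace ℝ (Fin N)) :
    (1 / 2 : ℝ) * Metric.infDist x C ^ 2 =
      (1 / 2 : ℝ) * ((∑ i ∈ Ir, (y i - x i) ^ 2) +
        (∑ i ∈ Ip, (max (y i - x i) 0) ^ 2) +
        (∑ i ∈ Im, (min (y i - x i) 0) ^ 2)) := by
  set S : Fin N → Set ℝ := fun i => {t | (i ∈ Ir → t = y i) ∧ (i ∈ Ip → θp ≤ t) ∧ (i ∈ Im → t ≤ θm)}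
  have hCS : C = {w : EuclideanSpace ℝ (Fin N) | ∀ i, w i ∈ S i} := by
    rw [hC]
    ext w
    simp only [mem_ofPred_eq, S]
    grind
  have hcoord : ∀ i, IsClosed (S i) ∧ (S i).Nonempty ∧ infDist (x i) (S i) ^ 2 =
      (if i ∈ Ir then (y i - x i) ^ 2 else 0) + (if i ∈ Ip then max (y i - x i) 0 ^ 2 else 0) +
        (if i ∈ Im then min (y i - x i) 0 ^ 2 else 0) := by
    intro i
    rcases hpart i with ⟨hr, hp, hm⟩ | ⟨hr, hp, hm⟩ | ⟨hr, hp, hm⟩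
    · have hSi : S i = {y i} := by ext; simp [S, hr, hp, hm]
      rw [hSi, infDist_singleton, Real.dist_eq, sq_abs]
      exact ⟨isClosed_singleton, singleton_nonempty _, by simp [hr, hp, hm, sub_sq_comm]⟩
    · have hSi : S i = Ici θp := by ext; simp [S, hr, hp, hm]
      rw [hSi, Real.infDist_Ici, ← hyp i hp]
      exact ⟨isClosed_Ici, nonempty_Ici, by simp [hr, hp, hm]⟩
    · have hSi : S i = Iic θm := by ext; simp [S, hr, hp, hm]
      rw [hSi, Real.infDist_Iic, ← hym i hm]
      refine ⟨isClosed_Iic, nonempty_Iic, ?_⟩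
      simp only [hr, hp, hm, if_false, if_true, zero_add]
      rcases le_total (y i) (x i) with h | h <;> simp [h, sub_sq_comm]
  rw [hCS, PiLp.infDist_sq_eq_sum_infDist_sq (fun i => (hcoord i).1) (fun i => (hcoord i).2.1),
    Finset.sum_congr rfl fun i _ => (hcoord i).2.2, Finset.sum_add_distrib, Finset.sum_add_distrib,
    Finset.sum_ite_mem, Finset.sum_ite_mem, Finset.sum_ite_mem, Finset.univ_inter,
    Finset.univ_inter, Finset.univ_inter]

/-- for the clipping consistency set `C(y)`, the squared distance is
`(1/2) dist(x, C(y))² = (1/2)[ ‖M_r(y − x)‖² + ‖M_c⁺(y − x)₊‖² + ‖M_c⁻(y − x)₋‖² ]`,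
written with coordinatewise positive/negative parts over the reliable, positively
clipped and negatively clipped index sets. -/
theorem stmt_12 (N : ℕ) (θp θm : ℝ) (hθ : θm < θp)
    (Ir Ip Im : Finset (Fin N))
    (hpart : ∀ i, (i ∈ Ir ∧ i ∉ Ip ∧ i ∉ Im) ∨ (i ∉ Ir ∧ i ∈ Ip ∧ i ∉ Im) ∨
      (i ∉ Ir ∧ i ∉ Ip ∧ i ∈ Im))
    (y : EuclideanSpace ℝ (Fin N))
    (hyp : ∀ i ∈ Ip, y i = θp) (hym : ∀ i ∈ Im, y i = θm)
    (C : Set (EuclideanSpace ℝ (Fin N)))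
    (hC : C = {x : EuclideanSpace ℝ (Fin N) |
      (∀ i ∈ Ir, x i = y i) ∧ (∀ i ∈ Ip, θp ≤ x i) ∧ (∀ i ∈ Im, x i ≤ θm)})
    (x : EuclideanSpace ℝ (Fin N)) :
    (1 / 2 : ℝ) * Metric.infDist x C ^ 2 =
      (1 / 2 : ℝ) * ((∑ i ∈ Ir, (y i - x i) ^ 2) +
        (∑ i ∈ Ip, (max (y i - x i) 0) ^ 2) +
        (∑ i ∈ Im, (min (y i - x i) 0) ^ 2)) :=
  stmt_12_general N θp θm Ir Ip Im hpart y hyp hym C hC x
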